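/- Let p₁ = N(μ₁, Σ), p₂ = N(μ₂, Σ) on ℝ^D with Σ positive definite and μ₁ ≠ μ₂, and let b ∈ ℝ. Define a = Σ⁻¹(μ₁−μ₂), μ' = (μ₁+μ₂)/2, A = b(I − aaᵀ/‖a‖²) − Σ⁻¹, and α(x) = exp(−½(x−μ')ᵀA(x−μ')). Then (∇log α(x))ᵀ(Σ⁻¹(μ₁−μ₂)) + g(x) = 0 for all x, where g(x) = ½(∇²p₁(x)/p₁(x) − ∇²p₂(x)/p₂(x)). That is, the whole one-parameter family of weights indexed by b eliminates the leading-order bias. -/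

import Mathlib

open Real Matrix

/-- Laplacian of a scalar function on `ℝ^D`. -/
noncomputable def lap {D : ℕ} (f : EuclideanSpace ℝ (Fin D) → ℝ)
    (x : EuclideanSpace ℝ (Fin D)) : ℝ :=
  ∑ i, fderiv ℝ (fun y => fderiv ℝ f y (EuclideanSpace.single i 1)) x
      (EuclideanSpace.single i 1)

/-- Quadratic form `vᵀ M v`. -/
def quadForm {D : ℕ} (M : Matrix (Fin D) (Fin D) ℝ) (v : Fin D → ℝ) : ℝ :=
  ∑ i, ∑ j, v i * M i j * v j

/-- Multivariate Gaussian density `N(x; μ, S)` on `ℝ^D`. -/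
noncomputable def gaussDensity {D : ℕ} (μ : Fin D → ℝ)
    (S : Matrix (Fin D) (Fin D) ℝ) (x : EuclideanSpace ℝ (Fin D)) : ℝ :=
  (2 * π) ^ (-(D : ℝ) / 2) * S.det ^ (-(1 : ℝ) / 2) *
    Real.exp (-(1 / 2) * quadForm S⁻¹ (fun i => x i - μ i))

/-!
For a Gaussian `p = c · exp φ` one has `Δp / p = ‖∇φ‖² + Δφ = ‖Q (x - μ)‖² - tr Q` with
`Q = Σ⁻¹`, so the traces cancel in `g`; writing `w = x - μ'` and `a = Q (μ₁ - μ₂)`,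
`g(x) = ½ (‖Q w - a/2‖² - ‖Q w + a/2‖²) = -⟪Q w, a⟫`. On the other side `∇ log α (x) = -A w`,
and since `A` is symmetric and the projection `I - a aᵀ / ‖a‖²` kills `a`, we get
`⟪-A w, a⟫ = -⟪w, A a⟫ = ⟪w, Q a⟫ = ⟪Q w, a⟫`.
-/

open scoped RealInnerProductSpace

section InnerProductSpace

variable {F : Type*} [NormedAddCommGroup F] [InnerProductSpace ℝ F] {T : F →L[ℝ] F}

theorem hasFDerivAt_apply_sub (m x : F) : HasFDerivAt (fun y => T (y - m)) T x :=
  T.hasFDerivAt.comp x ((hasFDerivAt_id x).sub_const m)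

theorem fderiv_fderiv_const_mul_exp_apply {φ : F → ℝ} (hφ : ContDiff ℝ 2 φ) (c : ℝ) (x v : F) :
    fderiv ℝ (fun y => fderiv ℝ (fun y => c * exp (φ y)) y v) x v
      = c * exp (φ x) * (fderiv ℝ φ x v ^ 2 + fderiv ℝ (fun y => fderiv ℝ φ y v) x v) := by
  have hφ' : Differentiable ℝ φ := hφ.differentiable (by norm_num)
  have hφ'' : Differentiable ℝ (fun y => fderiv ℝ φ y v) :=
    ((hφ.fderiv_right (m := 1) (by norm_num)).differentiable (by norm_num)).clm_apply
      (differentiable_const v)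
  have hexp : ∀ y, HasFDerivAt (fun y => c * exp (φ y)) ((c * exp (φ y)) • fderiv ℝ φ y) y :=
    fun y => by simpa [smul_smul] using ((hφ' y).hasFDerivAt.exp).const_mul c
  simp_rw [(hexp _).fderiv, FunLike.coe_smul, Pi.smul_apply, smul_eq_mul]
  rw [((hexp x).fun_mul (hφ'' x).hasFDerivAt).fderiv]
  simp only [FunLike.coe_add, Pi.add_apply, FunLike.coe_smul, Pi.smul_apply, smul_eq_mul]
  ring

variable [CompleteSpace F]

theorem hasGradientAt_neg_half_inner_sub (hT : IsSelfAdjoint T) (m x : F) :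
    HasGradientAt (fun y => -(1 / 2) * ⟪y - m, T (y - m)⟫) (-T (x - m)) x := by
  rw [hasGradientAt_iff_hasFDerivAt]
  refine ((((hasFDerivAt_id x).sub_const m).inner ℝ (hasFDerivAt_apply_sub m x)).const_mul
    _).congr_fderiv ?_
  ext v
  have hsymm : ⟪T (x - m), v⟫ = ⟪x - m, T v⟫ := hT.isSymmetric (x - m) v
  simp only [FunLike.coe_smul, Pi.smul_apply, ContinuousLinearMap.comp_apply,
    ContinuousLinearMap.prod_apply, fderivInnerCLM_apply, ContinuousLinearMap.id_apply, id_eq,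
    InnerProductSpace.toDual_apply_apply, smul_eq_mul]
  rw [← hsymm, real_inner_comm (T (x - m)) v, inner_neg_left]
  ring

theorem fderiv_fderiv_neg_half_inner_sub_apply (hT : IsSelfAdjoint T) (m x v : F) :
    fderiv ℝ (fun y => fderiv ℝ (fun y => -(1 / 2) * ⟪y - m, T (y - m)⟫) y v) x v
      = -⟪T v, v⟫ := by
  simp_rw [(hasGradientAt_neg_half_inner_sub hT m _).fderiv_apply, inner_neg_left]
  rw [((hasFDerivAt_apply_sub m x).inner ℝ (hasFDerivAt_const v x)).fun_neg.fderiv]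
  simp [fderivInnerCLM_apply]

theorem bias_cancellation {A : F →L[ℝ] F} (hA : IsSelfAdjoint A) (hT : IsSelfAdjoint T)
    {m₁ m₂ : F} (hAa : A (T (m₁ - m₂)) = -T (T (m₁ - m₂))) (x : F) (t : ℝ) :
    ⟪-A (x - (1 / 2 : ℝ) • (m₁ + m₂)), T (m₁ - m₂)⟫
      + 1 / 2 * ((‖T (x - m₁)‖ ^ 2 - t) - (‖T (x - m₂)‖ ^ 2 - t)) = 0 := by
  set w := x - (1 / 2 : ℝ) • (m₁ + m₂)
  set a := T (m₁ - m₂)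
  have hw₁ : T (x - m₁) = T w - (1 / 2 : ℝ) • a := by
    rw [← map_smul, ← map_sub]; congr 1; module
  have hw₂ : T (x - m₂) = T w + (1 / 2 : ℝ) • a := by
    rw [← map_smul, ← map_add]; congr 1; module
  have hinner : ⟪-A w, a⟫ = ⟪T w, a⟫ := by
    have hA_symm : ⟪A w, a⟫ = ⟪w, A a⟫ := hA.isSymmetric w a
    have hT_symm : ⟪T w, a⟫ = ⟪w, T a⟫ := hT.isSymmetric w a
    rw [inner_neg_left, hA_symm, hAa, inner_neg_right, neg_neg, hT_symm]
  rw [hinner, hw₁, hw₂, norm_sub_sq_real, norm_add_sq_real, inner_smul_right, norm_smul]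
  ring

end InnerProductSpace

theorem one_sub_inv_dotProduct_smul_vecMulVec_mulVec_self {K n : Type*} [Field K] [Fintype n]
    [DecidableEq n] {a : n → K} (ha : a ⬝ᵥ a ≠ 0) :
    (1 - (a ⬝ᵥ a)⁻¹ • vecMulVec a a) *ᵥ a = 0 := by
  rw [sub_mulVec, one_mulVec, smul_mulVec, vecMulVec_mulVec, op_smul_eq_smul, smul_smul,
    inv_mul_cancel₀ ha, one_smul, sub_self]

theorem isHermitian_smul_one_sub_smul_vecMulVec_sub {n : Type*} [Fintype n] [DecidableEq n]
    {Q : Matrix n n ℝ} (hQ : Q.IsHermitian) (a : n → ℝ) (b c : ℝ) :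
    (b • (1 - c • vecMulVec a a) - Q).IsHermitian := by
  have hvv : (vecMulVec a a).IsHermitian := by ext i j; simp [vecMulVec_apply, mul_comm]
  exact ((isHermitian_one.sub (hvv.smul (.all _))).smul (.all _)).sub hQ

theorem Matrix.PosDef.mulVec_ne_zero {K n : Type*} [Field K] [PartialOrder K] [StarRing K]
    [Fintype n] [DecidableEq n] {M : Matrix n n K} (hM : M.PosDef) {v : n → K} (hv : v ≠ 0) :
    M *ᵥ v ≠ 0 :=
  fun h => hv (mulVec_injective_iff_isUnit.mpr hM.isUnit (h.trans (mulVec_zero M).symm))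

theorem Matrix.IsHermitian.isSelfAdjoint_toEuclideanCLM {𝕜 n : Type*} [RCLike 𝕜] [Fintype n]
    [DecidableEq n] {M : Matrix n n 𝕜} (hM : M.IsHermitian) :
    IsSelfAdjoint (toEuclideanCLM (𝕜 := 𝕜) M) :=
  hM.isSelfAdjoint.map _

section EuclideanSpace

variable {D : ℕ} {M : Matrix (Fin D) (Fin D) ℝ}

theorem lap_const_mul_exp {φ : EuclideanSpace ℝ (Fin D) → ℝ} (hφ : ContDiff ℝ 2 φ)
    (c : ℝ) (x : EuclideanSpace ℝ (Fin D)) :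
    lap (fun y => c * exp (φ y)) x = c * exp (φ x) * (‖gradient φ x‖ ^ 2 + lap φ x) := by
  have hnorm : ‖gradient φ x‖ ^ 2 = ∑ i, fderiv ℝ φ x (EuclideanSpace.single i 1) ^ 2 := by
    simp [EuclideanSpace.real_norm_sq_eq, ← inner_gradient_left,
      EuclideanSpace.inner_single_right]
  simp only [lap, fderiv_fderiv_const_mul_exp_apply hφ, ← Finset.mul_sum, Finset.sum_add_distrib,
    hnorm]

theorem quadForm_eq_inner (μ : Fin D → ℝ) (y : EuclideanSpace ℝ (Fin D)) :
    quadForm M (fun i => y i - μ i)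
      = ⟪y - WithLp.toLp 2 μ, toEuclideanCLM (𝕜 := ℝ) M (y - WithLp.toLp 2 μ)⟫ := by
  rw [inner_toEuclideanCLM]
  simp [quadForm, dotProduct, mulVec, Finset.mul_sum, mul_assoc]

theorem contDiff_neg_half_inner_sub {m : EuclideanSpace ℝ (Fin D)} :
    ContDiff ℝ 2 (fun y => -(1 / 2) * ⟪y - m, toEuclideanCLM (𝕜 := ℝ) M (y - m)⟫) :=
  contDiff_const.mul ((contDiff_id.sub contDiff_const).inner ℝ
    ((toEuclideanCLM (𝕜 := ℝ) M).contDiff.comp (contDiff_id.sub contDiff_const)))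

theorem lap_neg_half_inner_sub (hM : M.IsHermitian) (m x : EuclideanSpace ℝ (Fin D)) :
    lap (fun y => -(1 / 2) * ⟪y - m, toEuclideanCLM (𝕜 := ℝ) M (y - m)⟫) x = -M.trace := by
  simp only [lap, fderiv_fderiv_neg_half_inner_sub_apply hM.isSelfAdjoint_toEuclideanCLM]
  simp [EuclideanSpace.inner_single_right, Matrix.trace]

theorem lap_gaussDensity_div {S : Matrix (Fin D) (Fin D) ℝ} (hS : S.PosDef) (μ : Fin D → ℝ)
    (x : EuclideanSpace ℝ (Fin D)) :
    lap (gaussDensity μ S) x / gaussDensity μ S x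
      = ‖toEuclideanCLM (𝕜 := ℝ) S⁻¹ (x - WithLp.toLp 2 μ)‖ ^ 2 - S⁻¹.trace := by
  set c := (2 * π) ^ (-(D : ℝ) / 2) * S.det ^ (-(1 : ℝ) / 2)
  have hc : 0 < c := by have := hS.det_pos; positivity
  have hS' : S⁻¹.IsHermitian := hS.isHermitian.inv
  have hp : gaussDensity μ S = fun y => c * exp (-(1 / 2) *
      ⟪y - WithLp.toLp 2 μ, toEuclideanCLM (𝕜 := ℝ) S⁻¹ (y - WithLp.toLp 2 μ)⟫) := by
    ext y; rw [gaussDensity, quadForm_eq_inner]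
  rw [hp, lap_const_mul_exp contDiff_neg_half_inner_sub, lap_neg_half_inner_sub hS',
    (hasGradientAt_neg_half_inner_sub hS'.isSelfAdjoint_toEuclideanCLM _ x).gradient, norm_neg,
    mul_div_cancel_left₀ _ (by positivity), ← sub_eq_add_neg]

end EuclideanSpace

theorem weight_family_kills_bias {D : ℕ}
    (μ₁ μ₂ : Fin D → ℝ) (S : Matrix (Fin D) (Fin D) ℝ)
    (hS : S.PosDef) (hμ : μ₁ ≠ μ₂) (b : ℝ) :
    let a : Fin D → ℝ := S⁻¹.mulVec (μ₁ - μ₂)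
    let μ' : Fin D → ℝ := fun i => (μ₁ i + μ₂ i) / 2
    let A : Matrix (Fin D) (Fin D) ℝ :=
      b • (1 - (∑ i, a i ^ 2)⁻¹ • Matrix.vecMulVec a a) - S⁻¹
    let α : EuclideanSpace ℝ (Fin D) → ℝ := fun x =>
      Real.exp (-(1 / 2) * quadForm A (fun i => x i - μ' i))
    let p₁ := gaussDensity μ₁ S
    let p₂ := gaussDensity μ₂ S
    ∀ x : EuclideanSpace ℝ (Fin D),
      (inner ℝ (gradient (fun y => Real.log (α y)) x)
          (WithLp.toLp 2 (fun i => S⁻¹.mulVec (μ₁ - μ₂) i : Fin D → ℝ) :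
            EuclideanSpace ℝ (Fin D)) : ℝ)
        + (1 / 2) * (lap p₁ x / p₁ x - lap p₂ x / p₂ x) = 0 := by
  intro a μ' A α p₁ p₂ x
  have hQ : S⁻¹.IsHermitian := hS.isHermitian.inv
  have hA : A.IsHermitian := isHermitian_smul_one_sub_smul_vecMulVec_sub hQ a b _
  have ha : a ⬝ᵥ a ≠ 0 :=
    dotProduct_self_eq_zero.not.mpr (hS.inv.mulVec_ne_zero (sub_ne_zero.mpr hμ))
  have hsq : ∑ i, a i ^ 2 = a ⬝ᵥ a := by simp [dotProduct, sq]
  have hAa : toEuclideanCLM (𝕜 := ℝ) A (WithLp.toLp 2 a)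
      = -toEuclideanCLM (𝕜 := ℝ) S⁻¹ (WithLp.toLp 2 a) := by
    simp only [toEuclideanCLM_toLp, A, hsq, sub_mulVec, smul_mulVec,
      one_sub_inv_dotProduct_smul_vecMulVec_mulVec_self ha, smul_zero, zero_sub]
    rfl
  have hgrad : gradient (fun y => log (α y)) x
      = -toEuclideanCLM (𝕜 := ℝ) A (x - WithLp.toLp 2 μ') := by
    simp only [α, Real.log_exp, quadForm_eq_inner]
    exact (hasGradientAt_neg_half_inner_sub hA.isSelfAdjoint_toEuclideanCLM _ x).gradient
  have hμ' : WithLp.toLp 2 μ' = (1 / 2 : ℝ) • (WithLp.toLp 2 μ₁ + WithLp.toLp 2 μ₂) := by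
    ext i; simp only [μ', PiLp.smul_apply, PiLp.add_apply, smul_eq_mul]; ring
  simp only [p₁, p₂, hgrad, lap_gaussDensity_div hS, hμ']
  exact bias_cancellation hA.isSelfAdjoint_toEuclideanCLM hQ.isSelfAdjoint_toEuclideanCLM
    (m₁ := WithLp.toLp 2 μ₁) (m₂ := WithLp.toLp 2 μ₂) hAa x _
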